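/- There exists a numeral system which possesses a closed λ-term for Successor and a closed λ-term for Zero Test, but which possesses no closed λ-term for Predecessor. -/

import Mathlib

/-- Untyped λ-terms in de Bruijn notation. -/
inductive Lam : Type
  | var : ℕ → Lam
  | app : Lam → Lam → Lam
  | lam : Lam → Lam
  deriving DecidableEq

namespace Lam

/-- Shift by one the free variables with index ≥ `d`. -/
def lift (d : ℕ) : Lam → Lam
  | var n => if n < d then var n else var (n + 1)
  | app M N => app (lift d M) (lift d N)
  | lam M => lam (lift (d + 1) M)

/-- Capture-avoiding substitution of `N` for the free variable of index `n`. -/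
def subst : Lam → ℕ → Lam → Lam
  | var m, n, N => if m = n then N else if n < m then var (m - 1) else var m
  | app M₁ M₂, n, N => app (subst M₁ n N) (subst M₂ n N)
  | lam M, n, N => lam (subst M (n + 1) (lift 0 N))

/-- One-step β-reduction (contraction of a β-redex anywhere in the term). -/
inductive Step : Lam → Lam → Prop
  | beta (M N : Lam) : Step (app (lam M) N) (subst M 0 N)
  | appL {M M' : Lam} (N : Lam) : Step M M' → Step (app M N) (app M' N)
  | appR (M : Lam) {N N' : Lam} : Step N N' → Step (app M N) (app M N')
  | lam {M M' : Lam} : Step M M' → Step (Lam.lam M) (Lam.lam M')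

/-- β-equivalence: the equivalence relation generated by one-step β-reduction. -/
def BetaEq : Lam → Lam → Prop := Relation.EqvGen Step

/-- The variable of index `n` occurs free in the term. -/
def HasFree : Lam → ℕ → Prop
  | var m, n => m = n
  | app M N, n => HasFree M n ∨ HasFree N n
  | lam M, n => HasFree M (n + 1)

/-- A term is closed if it has no free variables. -/
def Closed (M : Lam) : Prop := ∀ n, ¬ HasFree M n

/-- A term is β-normal: it contains no β-redex. -/
def IsBetaNormal : Lam → Prop
  | app (lam _) _ => False
  | app M N => IsBetaNormal M ∧ IsBetaNormal N
  | lam M => IsBetaNormal M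
  | var _ => True

/-- A term is βη-normal: it contains no β-redex and no η-redex
`λx.(M x)` with `x` not free in `M`. -/
def IsBetaEtaNormal : Lam → Prop
  | app (lam _) _ => False
  | app M N => IsBetaEtaNormal M ∧ IsBetaEtaNormal N
  | lam (app M (var 0)) => HasFree M 0 ∧ IsBetaEtaNormal (app M (var 0))
  | lam M => IsBetaEtaNormal M
  | var _ => True

/-- `I = λx.x`. -/
def I : Lam := lam (var 0)

/-- `T = λxλy.x`. -/
def T : Lam := lam (lam (var 1))

/-- `F = λxλy.y`. -/
def F : Lam := lam (lam (var 0))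

/-- The pair `<M,N> = λx.(x M N)` (the binder shifts the free variables of `M,N`). -/
def pair (M N : Lam) : Lam := lam (app (app (var 0) (lift 0 M)) (lift 0 N))

end Lam

/-!
The numeral `dₙ` is the pair `⟨tₙ, Wₙ⟩` of a tag (`T` for `0`, `F` otherwise) and the term
`Wₙ = λyₙ … y₀. yₙ yₙ₋₁ … y₀ I`, which starts with `n + 1` abstractions. The zero test `λd. d T`
projects the tag, and the successor `λd z. z F (λa b. d F (a b))` works because `λa b. Wₙ (a b)`
reduces to `Wₙ₊₁`.

A predecessor `P` would give the closed term `Q = λw. P ⟨F, w⟩ T` with `Q W₁ = T` and `Q Wₘ = F`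
for all `m ≥ 2`. The reduction of `Q W₂` to `F` can be mirrored by a reduction of `Q x` for a
variable `x`, so `Q x` reduces to a head normal form `λz₁ … zₖ. h A₁ … Aⱼ`, whose instances are
reducts of the `Q Wₘ`. If `h ≠ x`, the normal forms of all `Q Wₘ` share the head variable `h`, but
those of `T` and `F` differ. If `h = x`, then `Q Wⱼ₊₂` reduces to `λz⃗. Wⱼ₊₂ A₁ … Aⱼ`, which keeps
at least three leading abstractions, whereas `F` has two.
-/

namespace Lam

section Substitution

theorem lift_lift (M : Lam) {d e : ℕ} (h : e ≤ d) :
    lift e (lift d M) = lift (d + 1) (lift e M) := by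
  induction M generalizing d e with
  | var n => by_cases n < e <;> by_cases n < d <;> simp [lift, *] <;> omega
  | app M N ihM ihN => simp [lift, ihM h, ihN h]
  | lam M ih => simp [lift, ih (Nat.succ_le_succ h)]

theorem subst_lift (M N : Lam) (n : ℕ) : subst (lift n M) n N = M := by
  induction M generalizing n N with
  | var m =>
    simp only [lift]
    split_ifs <;> simp only [subst] <;> split_ifs <;> simp_all <;> omega
  | app M₁ M₂ ih₁ ih₂ => simp [lift, subst, ih₁, ih₂]
  | lam M ih => simp [lift, subst, ih]

theorem lift_subst_of_le (M N : Lam) {d n : ℕ} (h : d ≤ n) :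
    lift d (subst M n N) = subst (lift d M) (n + 1) (lift d N) := by
  induction M generalizing d n N with
  | var m =>
    simp only [lift, subst]
    split_ifs <;> simp only [lift, subst] <;> split_ifs <;> simp_all <;> omega
  | app M₁ M₂ ih₁ ih₂ => simp [lift, subst, ih₁ _ h, ih₂ _ h]
  | lam M ih => simp [lift, subst, ih _ (Nat.succ_le_succ h), lift_lift N (Nat.zero_le d)]

theorem lift_subst_of_ge (M N : Lam) {d n : ℕ} (h : n ≤ d) :
    lift d (subst M n N) = subst (lift (d + 1) M) n (lift d N) := by
  induction M generalizing d n N with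
  | var m =>
    simp only [lift, subst]
    split_ifs <;> simp only [lift, subst] <;> split_ifs <;> simp_all <;> omega
  | app M₁ M₂ ih₁ ih₂ => simp [lift, subst, ih₁ _ h, ih₂ _ h]
  | lam M ih => simp [lift, subst, ih _ (Nat.succ_le_succ h), lift_lift N (Nat.zero_le d)]

theorem subst_subst (M N K : Lam) {m n : ℕ} (h : m ≤ n) :
    subst (subst M m N) n K = subst (subst M (n + 1) (lift m K)) m (subst N n K) := by
  induction M generalizing m n N K with
  | var v =>
    simp only [subst]
    split_ifs <;> simp only [subst, subst_lift] <;> (try split_ifs) <;> simp_all <;> omega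
  | app M₁ M₂ ih₁ ih₂ => simp [subst, ih₁ _ _ h, ih₂ _ _ h]
  | lam M ih =>
    simp [subst, ih _ _ (Nat.succ_le_succ h), ← lift_lift K (Nat.zero_le m),
      ← lift_subst_of_le N K (Nat.zero_le n)]

end Substitution

section FreeVariables

theorem lift_eq_self_of_hasFree_lt {M : Lam} {d : ℕ} (h : ∀ i, HasFree M i → i < d) :
    lift d M = M := by
  induction M generalizing d with
  | var m => simp [lift, h m rfl]
  | app M N ihM ihN =>
    simp [lift, ihM fun i hi => h i (Or.inl hi), ihN fun i hi => h i (Or.inr hi)]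
  | lam M ih =>
    refine congrArg lam (ih fun i hi => ?_)
    cases i with
    | zero => omega
    | succ i => exact Nat.succ_lt_succ (h i hi)

theorem subst_eq_self_of_hasFree_lt {M : Lam} {n : ℕ} (N : Lam)
    (h : ∀ i, HasFree M i → i < n) :
    subst M n N = M := by
  induction M generalizing n N with
  | var m => have := h m rfl; simp [subst, this.ne, this.not_gt]
  | app M₁ M₂ ih₁ ih₂ =>
    simp [subst, ih₁ N fun i hi => h i (Or.inl hi), ih₂ N fun i hi => h i (Or.inr hi)]
  | lam M ih =>
    refine congrArg lam (ih _ fun i hi => ?_)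
    cases i with
    | zero => omega
    | succ i => exact Nat.succ_lt_succ (h i hi)

theorem Closed.lift_eq {M : Lam} (hM : Closed M) (d : ℕ) : lift d M = M :=
  lift_eq_self_of_hasFree_lt fun i hi => absurd hi (hM i)

theorem Closed.subst_eq {M : Lam} (hM : Closed M) (n : ℕ) (N : Lam) : subst M n N = M :=
  subst_eq_self_of_hasFree_lt N fun i hi => absurd hi (hM i)

end FreeVariables

section Reduction

abbrev Steps : Lam → Lam → Prop := Relation.ReflTransGen Step

theorem Steps.app_left {M M' : Lam} (N : Lam) (h : Steps M M') : Steps (app M N) (app M' N) :=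
  Relation.ReflTransGen.lift (app · N) (fun _ _ => Step.appL N) _ _ h

theorem Steps.app_right (M : Lam) {N N' : Lam} (h : Steps N N') : Steps (app M N) (app M N') :=
  Relation.ReflTransGen.lift (app M) (fun _ _ => Step.appR M) _ _ h

theorem Steps.lam {M M' : Lam} (h : Steps M M') : Steps (lam M) (lam M') :=
  Relation.ReflTransGen.lift Lam.lam (fun _ _ => Step.lam) _ _ h

theorem Step.lift {M N : Lam} (h : Step M N) (d : ℕ) : Step (lift d M) (lift d N) := by
  induction h generalizing d with
  | beta B A =>
    rw [lift_subst_of_ge B A (Nat.zero_le d)]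
    exact Step.beta _ _
  | appL N _ ih => exact Step.appL _ (ih d)
  | appR M _ ih => exact Step.appR _ (ih d)
  | lam _ ih => exact Step.lam (ih (d + 1))

theorem Step.subst {M M' : Lam} (h : Step M M') (n : ℕ) (N : Lam) :
    Step (subst M n N) (subst M' n N) := by
  induction h generalizing n N with
  | beta B A =>
    rw [subst_subst B A N (Nat.zero_le n)]
    exact Step.beta _ _
  | appL K _ ih => exact Step.appL _ (ih n N)
  | appR K _ ih => exact Step.appR _ (ih n N)
  | lam _ ih => exact Step.lam (ih (n + 1) (Lam.lift 0 N))

theorem Steps.lift {M N : Lam} (h : Steps M N) (d : ℕ) : Steps (lift d M) (lift d N) :=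
  Relation.ReflTransGen.lift (Lam.lift d) (fun _ _ hs => Step.lift hs d) _ _ h

theorem Steps.subst {M M' : Lam} (h : Steps M M') (n : ℕ) (N : Lam) :
    Steps (subst M n N) (subst M' n N) :=
  Relation.ReflTransGen.lift (Lam.subst · n N) (fun _ _ hs => Step.subst hs n N) _ _ h

theorem Steps.betaEq {M N : Lam} (h : Steps M N) : BetaEq M N :=
  Relation.EqvGen.reflTransGen_le_eqvGen _ _ _ h

theorem BetaEq.symm {M N : Lam} (h : BetaEq M N) : BetaEq N M := Relation.EqvGen.symm _ _ h

theorem BetaEq.trans {M N K : Lam} (h₁ : BetaEq M N) (h₂ : BetaEq N K) : BetaEq M K :=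
  Relation.EqvGen.trans _ _ _ h₁ h₂

theorem BetaEq.app_left {M M' : Lam} (N : Lam) (h : BetaEq M M') :
    BetaEq (app M N) (app M' N) := by
  induction h with
  | rel _ _ hs => exact Relation.EqvGen.rel _ _ (Step.appL N hs)
  | refl => exact Relation.EqvGen.refl _
  | symm _ _ _ ih => exact ih.symm
  | trans _ _ _ _ _ ih₁ ih₂ => exact ih₁.trans ih₂

end Reduction

section Confluence

inductive Par : Lam → Lam → Prop
  | var (n : ℕ) : Par (var n) (var n)
  | lam {M M' : Lam} : Par M M' → Par (lam M) (lam M')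
  | app {M M' N N' : Lam} : Par M M' → Par N N' → Par (app M N) (app M' N')
  | beta {B B' A A' : Lam} : Par B B' → Par A A' → Par (app (lam B) A) (subst B' 0 A')

theorem Par.refl (M : Lam) : Par M M := by
  induction M with
  | var n => exact Par.var n
  | app M N ihM ihN => exact Par.app ihM ihN
  | lam M ih => exact Par.lam ih

theorem Step.par {M N : Lam} (h : Step M N) : Par M N := by
  induction h with
  | beta B A => exact Par.beta (Par.refl B) (Par.refl A)
  | appL N _ ih => exact Par.app ih (Par.refl N)
  | appR M _ ih => exact Par.app (Par.refl M) ih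
  | lam _ ih => exact Par.lam ih

theorem Par.steps {M N : Lam} (h : Par M N) : Steps M N := by
  induction h with
  | var n => exact Relation.ReflTransGen.refl
  | lam _ ih => exact ih.lam
  | app _ _ ihM ihN => exact (ihM.app_left _).trans (ihN.app_right _)
  | beta _ _ ihB ihA => exact ((ihB.lam.app_left _).trans (ihA.app_right _)).tail (Step.beta _ _)

theorem Par.lift {M N : Lam} (h : Par M N) (d : ℕ) : Par (lift d M) (lift d N) := by
  induction h generalizing d with
  | var n => exact Par.refl _
  | lam _ ih => exact Par.lam (ih (d + 1))
  | app _ _ ihM ihN => exact Par.app (ihM d) (ihN d)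
  | @beta B B' A A' _ _ ihB ihA =>
    rw [lift_subst_of_ge B' A' (Nat.zero_le d)]
    exact Par.beta (ihB (d + 1)) (ihA d)

theorem Par.subst {M M' N N' : Lam} (hM : Par M M') (hN : Par N N') (n : ℕ) :
    Par (subst M n N) (subst M' n N') := by
  induction hM generalizing n N N' with
  | var m =>
    simp only [Lam.subst]
    split_ifs
    exacts [hN, Par.refl _, Par.refl _]
  | lam _ ih => exact Par.lam (ih (hN.lift 0) (n + 1))
  | app _ _ ihM ihN => exact Par.app (ihM hN n) (ihN hN n)
  | @beta B B' A A' _ _ ihB ihA =>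
    rw [subst_subst B' A' N' (Nat.zero_le n)]
    exact Par.beta (ihB (hN.lift 0) (n + 1)) (ihA hN n)

/-- Takahashi's complete development. -/
def cd : Lam → Lam
  | var n => var n
  | lam M => lam (cd M)
  | app (lam B) A => subst (cd B) 0 (cd A)
  | app M N => app (cd M) (cd N)

theorem Par.par_cd {M N : Lam} (h : Par M N) : Par N (cd M) := by
  induction h with
  | var n => exact Par.var n
  | lam _ ih => exact Par.lam ih
  | @app M M' N N' hM _ ihM ihN =>
    cases M with
    | lam B =>
      cases hM
      cases ihM with
      | lam ihB => exact Par.beta ihB ihN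
    | var m => exact Par.app ihM ihN
    | app M₁ M₂ => exact Par.app ihM ihN
  | beta _ _ ihB ihA => exact ihB.subst ihA 0

theorem BetaEq.exists_steps {M N : Lam} (h : BetaEq M N) : ∃ K, Steps M K ∧ Steps N K := by
  have par_eq : Relation.ReflTransGen Par = Steps :=
    le_antisymm (Relation.reflTransGen_le_of_le fun _ _ => Par.steps)
      (Relation.ReflTransGen.mono fun _ _ => Step.par)
  have join_equiv := Relation.equivalence_join_reflTransGen fun a _ _ hb hc =>
    ⟨cd a, .single (Par.par_cd hb), .single (Par.par_cd hc)⟩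
  rw [par_eq] at join_equiv
  exact join_equiv.eqvGen_iff.mp (h.mono fun _ _ hs => ⟨_, .single hs, .refl⟩)

theorem isBetaNormal_app {M N : Lam} (h : IsBetaNormal (app M N)) :
    IsBetaNormal M ∧ IsBetaNormal N := by
  cases M <;> simp_all [IsBetaNormal]

theorem IsBetaNormal.not_step {M N : Lam} (hM : IsBetaNormal M) : ¬ Step M N := by
  intro h
  induction h with
  | beta => exact hM
  | appL N _ ih => exact ih (isBetaNormal_app hM).1
  | appR M _ ih => exact ih (isBetaNormal_app hM).2
  | lam _ ih => exact ih hM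

theorem BetaEq.steps_of_isBetaNormal {M N : Lam} (h : BetaEq M N) (hN : IsBetaNormal N) :
    Steps M N := by
  obtain ⟨K, hMK, hNK⟩ := h.exists_steps
  rcases hNK.cases_head with rfl | ⟨X, hX, -⟩
  exacts [hMK, absurd hX hN.not_step]

end Confluence

section HeadNormalForms

def lams : ℕ → Lam → Lam
  | 0, X => X
  | k + 1, X => lam (lams k X)

theorem foldl_app_map (f : Lam → Lam) (hf : ∀ M N, f (app M N) = app (f M) (f N))
    (H : Lam) (As : List Lam) : f (As.foldl app H) = (As.map f).foldl app (f H) := by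
  induction As generalizing H with
  | nil => rfl
  | cons A As ih => simp [ih, hf]

theorem subst_lams (k : ℕ) (X : Lam) (n : ℕ) (N : Lam) :
    subst (lams k X) n N = lams k (subst X (n + k) ((lift 0)^[k] N)) := by
  induction k generalizing n N with
  | zero => rfl
  | succ k ih =>
    simp only [lams, subst, ih, Function.iterate_succ_apply, Nat.add_right_comm n 1 k]
    rfl

theorem lams_lams (k m : ℕ) (X : Lam) : lams k (lams m X) = lams (m + k) X := by
  induction k with
  | zero => rfl
  | succ k ih => simp [lams, ih]

theorem hasFree_lams {k : ℕ} {X : Lam} {i : ℕ} :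
    HasFree (lams k X) i ↔ HasFree X (i + k) := by
  induction k generalizing i with
  | zero => rfl
  | succ k ih => simp [lams, HasFree, ih, Nat.add_right_comm, Nat.add_assoc]

theorem Steps.lams {X Y : Lam} (h : Steps X Y) (k : ℕ) : Steps (Lam.lams k X) (Lam.lams k Y) := by
  induction k with
  | zero => exact h
  | succ k ih => exact ih.lam

theorem Steps.foldl_app {H H' : Lam} (h : Steps H H') (As : List Lam) :
    Steps (As.foldl Lam.app H) (As.foldl Lam.app H') := by
  induction As generalizing H H' with
  | nil => exact h
  | cons A As ih => exact ih (h.app_left A)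

theorem exists_steps_foldl_app_lams (As : List Lam) (p : ℕ) (B : Lam) (hp : As.length ≤ p) :
    ∃ C, Steps (As.foldl app (lams p B)) (lams (p - As.length) C) := by
  induction As generalizing p B with
  | nil => exact ⟨B, .refl⟩
  | cons A As ih =>
    obtain ⟨p, rfl⟩ : ∃ p', p = p' + 1 := ⟨p - 1, by simp at hp; omega⟩
    obtain ⟨C, hC⟩ := ih p _ (by simp at hp; omega)
    refine ⟨C, Relation.ReflTransGen.trans (Steps.foldl_app (.single (Step.beta _ A)) As) ?_⟩
    simpa [subst_lams] using hC

theorem Step.lams_inv {k : ℕ} {X N : Lam} (h : Step (lams k X) N) : ∃ Y, N = lams k Y := by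
  induction k generalizing X N with
  | zero => exact ⟨N, rfl⟩
  | succ k ih =>
    cases h with
    | lam h =>
      obtain ⟨Y, rfl⟩ := ih h
      exact ⟨Y, rfl⟩

theorem Steps.lams_inv {k : ℕ} {X N : Lam} (h : Steps (Lam.lams k X) N) :
    ∃ Y, N = Lam.lams k Y := by
  induction h with
  | refl => exact ⟨X, rfl⟩
  | tail _ hs ih =>
    obtain ⟨Y, rfl⟩ := ih
    exact hs.lams_inv

/-- `Hnf k h j M`: `M` is a head normal form `λ^k. (var h) A₁ … Aⱼ`. -/
inductive Hnf : ℕ → ℕ → ℕ → Lam → Prop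
  | var (h : ℕ) : Hnf 0 h 0 (var h)
  | app {h j : ℕ} {M : Lam} (N : Lam) : Hnf 0 h j M → Hnf 0 h (j + 1) (app M N)
  | lam {k h j : ℕ} {M : Lam} : Hnf k h j M → Hnf (k + 1) h j (lam M)

theorem Hnf.ne_lam {h j : ℕ} {M X : Lam} (hM : Hnf 0 h j M) : M ≠ Lam.lam X := by
  rintro rfl
  cases hM

theorem Hnf.foldl_app {h j : ℕ} {H : Lam} (hH : Hnf 0 h j H) (As : List Lam) :
    Hnf 0 h (j + As.length) (As.foldl Lam.app H) := by
  induction As generalizing j H with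
  | nil => exact hH
  | cons A As ih => simpa [Nat.add_right_comm, Nat.add_assoc] using ih (hH.app A)

theorem Hnf.under_lams {h j : ℕ} {X : Lam} (hX : Hnf 0 h j X) (k : ℕ) :
    Hnf k h j (lams k X) := by
  induction k with
  | zero => exact hX
  | succ k ih => exact ih.lam

theorem Hnf.step {k h j : ℕ} {M N : Lam} (hM : Hnf k h j M) (hs : Step M N) : Hnf k h j N := by
  induction hM generalizing N with
  | var => cases hs
  | app A hM ih =>
    cases hs with
    | beta => cases hM
    | appL _ hs => exact (ih hs).app _
    | appR _ _ => exact hM.app _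
  | lam _ ih =>
    cases hs with
    | lam hs => exact (ih hs).lam

theorem Hnf.steps {k h j : ℕ} {M N : Lam} (hM : Hnf k h j M) (hs : Steps M N) : Hnf k h j N := by
  induction hs with
  | refl => exact hM
  | tail _ hs ih => exact ih.step hs

theorem Hnf.unique {k h j k' h' j' : ℕ} {M : Lam} (hM : Hnf k h j M) (hM' : Hnf k' h' j' M) :
    k = k' ∧ h = h' ∧ j = j' := by
  induction hM generalizing k' h' j' with
  | var => cases hM'; simp
  | app _ _ ih => cases hM' with | app _ hM' => simpa using ih hM'
  | lam _ ih => cases hM' with | lam hM' => simpa using ih hM'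

theorem Hnf.exists_subst_of_ne {k h j n : ℕ} {M : Lam} (hM : Hnf k h j M) (hh : h ≠ n + k) :
    ∃ h', ∀ N, Hnf k h' j (subst M n N) := by
  induction hM generalizing n with
  | var h =>
    refine ⟨if n < h then h - 1 else h, fun N => ?_⟩
    simp only [subst, if_neg (show h ≠ n by omega)]
    split_ifs <;> exact Hnf.var _
  | app A _ ih =>
    obtain ⟨h', hh'⟩ := ih hh
    exact ⟨h', fun N => (hh' N).app _⟩
  | lam _ ih =>
    obtain ⟨h', hh'⟩ := ih (n := n + 1) (by omega)
    exact ⟨h', fun N => (hh' _).lam⟩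

theorem Hnf.exists_subst_head {k h j n : ℕ} {M W : Lam} (hM : Hnf k h j M) (hh : h = n + k)
    (hW : Closed W) :
    ∃ As : List Lam, As.length = j ∧ subst M n W = lams k (As.foldl Lam.app W) := by
  induction hM generalizing n with
  | var h => exact ⟨[], rfl, by simp [subst, hh, lams]⟩
  | app A _ ih =>
    obtain ⟨As, rfl, hAs⟩ := ih hh
    exact ⟨As ++ [subst A n W], by simp, by simp [subst, hAs, lams]⟩
  | lam _ ih =>
    obtain ⟨As, rfl, hAs⟩ := ih (n := n + 1) (by omega)
    exact ⟨As, rfl, by simp [subst, hW.lift_eq, hAs, lams]⟩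

end HeadNormalForms

section Simulation

/-- `Sim W c X T`: `T` arises from `X` by substituting the closed term `W` for the variable `c`
and then reducing only inside the residuals of `W`, i.e. every occurrence `c X₁ … Xⱼ` in `X`
faces a reduct of `W T₁ … Tⱼ` in `T`, with `Xᵢ` and `Tᵢ` related again. -/
inductive Sim (W : Lam) : ℕ → Lam → Lam → Prop
  | var {c i : ℕ} : i ≠ c → Sim W c (var i) (var i)
  | lam {c : ℕ} {X T : Lam} : Sim W (c + 1) X T → Sim W c (lam X) (lam T)
  | app {c : ℕ} {X₁ T₁ X₂ T₂ : Lam} :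
      Sim W c X₁ T₁ → Sim W c X₂ T₂ → Sim W c (app X₁ X₂) (app T₁ T₂)
  | head {c : ℕ} {T : Lam} (ps : List (Lam × Lam)) :
      (∀ p ∈ ps, Sim W c p.1 p.2) → Steps ((ps.map Prod.snd).foldl Lam.app W) T →
      Sim W c ((ps.map Prod.fst).foldl Lam.app (var c)) T

variable {W : Lam}

theorem Sim.of_not_hasFree {c : ℕ} {X : Lam} (hX : ¬ HasFree X c) : Sim W c X X := by
  induction X generalizing c with
  | var i => exact Sim.var hX
  | app X₁ X₂ ih₁ ih₂ =>
    exact Sim.app (ih₁ fun h => hX (Or.inl h)) (ih₂ fun h => hX (Or.inr h))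
  | lam X ih => exact Sim.lam (ih hX)

theorem Sim.lift (hW : Closed W) {c : ℕ} {X T : Lam} (h : Sim W c X T) {d : ℕ} (hd : d ≤ c) :
    Sim W (c + 1) (Lam.lift d X) (Lam.lift d T) := by
  induction h generalizing d with
  | var hi =>
    simp only [Lam.lift]
    split_ifs <;> exact Sim.var (by omega)
  | lam _ ih => exact Sim.lam (ih (by omega))
  | app _ _ ih₁ ih₂ => exact Sim.app (ih₁ hd) (ih₂ hd)
  | @head c T ps hps hT ih =>
    have := Sim.head (W := W) (c := c + 1) (ps.map fun p => (Lam.lift d p.1, Lam.lift d p.2))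
      (fun _ hp => by obtain ⟨q, hq, rfl⟩ := List.mem_map.mp hp; exact ih q hq hd)
      (by simpa [foldl_app_map (Lam.lift d) (fun _ _ => rfl), hW.lift_eq, Function.comp_def]
        using hT.lift d)
    simpa [foldl_app_map (Lam.lift d) (fun _ _ => rfl), Lam.lift, show ¬ c < d by omega,
      Function.comp_def] using this

theorem Sim.subst (hW : Closed W) {c n : ℕ} {X T U V : Lam} (h : Sim W (c + 1) X T)
    (hn : n ≤ c) (hUV : Sim W c U V) : Sim W c (Lam.subst X n U) (Lam.subst T n V) := by
  generalize hc : c + 1 = c' at h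
  induction h generalizing c n U V with
  | var hi =>
    subst hc
    simp only [Lam.subst]
    split_ifs
    exacts [hUV, Sim.var (by omega), Sim.var (by omega)]
  | lam _ ih => exact Sim.lam (ih (by omega) (hUV.lift hW (Nat.zero_le c)) (by omega))
  | app _ _ ih₁ ih₂ => exact Sim.app (ih₁ hn hUV hc) (ih₂ hn hUV hc)
  | @head c' T ps hps hT ih =>
    subst hc
    have := Sim.head (W := W) (c := c) (ps.map fun p => (Lam.subst p.1 n U, Lam.subst p.2 n V))
      (fun _ hp => by obtain ⟨q, hq, rfl⟩ := List.mem_map.mp hp; exact ih q hq hn hUV rfl)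
      (by simpa [foldl_app_map (Lam.subst · n V) (fun _ _ => rfl), hW.subst_eq,
        Function.comp_def] using hT.subst n V)
    simpa [foldl_app_map (Lam.subst · n U) (fun _ _ => rfl), Lam.subst, show c + 1 ≠ n by omega,
      show n < c + 1 by omega, Function.comp_def] using this

theorem Sim.step (hW : Closed W) {c : ℕ} {X T T' : Lam} (h : Sim W c X T) (hs : Step T T') :
    ∃ X', Steps X X' ∧ Sim W c X' T' := by
  induction h generalizing T' with
  | var => cases hs
  | lam _ ih =>
    cases hs with
    | lam hs =>
      obtain ⟨X', hX', hsim⟩ := ih hs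
      exact ⟨_, hX'.lam, hsim.lam⟩
  | @app c X₁ T₁ X₂ T₂ h₁ h₂ ih₁ ih₂ =>
    cases hs with
    | appL _ hs =>
      obtain ⟨X', hX', hsim⟩ := ih₁ hs
      exact ⟨_, hX'.app_left _, hsim.app h₂⟩
    | appR _ hs =>
      obtain ⟨X', hX', hsim⟩ := ih₂ hs
      exact ⟨_, hX'.app_right _, h₁.app hsim⟩
    | beta B _ =>
      cases h₁ with
      | lam h₀ => exact ⟨_, .single (Step.beta _ _), h₀.subst hW (Nat.zero_le c) h₂⟩
      | head ps hps hT =>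
        -- the redex is a residual of `W`: absorb the argument into the `head` clause
        have := Sim.head (ps ++ [(X₂, T₂)])
          (fun p hp => by
            rcases List.mem_append.mp hp with hp | hp
            · exact hps p hp
            · obtain rfl := List.mem_singleton.mp hp
              exact h₂)
          (by simpa using (hT.app_left T₂).tail (Step.beta B T₂))
        exact ⟨_, .refl, by simpa using this⟩
  | head ps hps hT => exact ⟨_, .refl, Sim.head ps hps (hT.tail hs)⟩

theorem Sim.steps (hW : Closed W) {c : ℕ} {X T T' : Lam} (h : Sim W c X T) (hs : Steps T T') :
    ∃ X', Steps X X' ∧ Sim W c X' T' := by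
  induction hs with
  | refl => exact ⟨X, .refl, h⟩
  | tail _ hs ih =>
    obtain ⟨X', hX', hsim⟩ := ih
    obtain ⟨X'', hX'', hsim'⟩ := hsim.step hW hs
    exact ⟨X'', hX'.trans hX'', hsim'⟩

theorem Sim.exists_hnf {c : ℕ} {X T : Lam} (hXT : Sim W c X T) {k h j : ℕ} (hT : Hnf k h j T) :
    ∃ k' h' j', k' ≤ k ∧ Hnf k' h' j' X := by
  induction hXT generalizing k h j with
  | @var c i _ => exact ⟨0, i, 0, Nat.zero_le _, Hnf.var i⟩
  | lam _ ih =>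
    cases hT with
    | lam hT =>
      obtain ⟨k', h', j', hk, hX⟩ := ih hT
      exact ⟨k' + 1, h', j', by omega, hX.lam⟩
  | app _ _ ih₁ _ =>
    cases hT with
    | app _ hT =>
      obtain ⟨k', h', j', hk, hX⟩ := ih₁ hT
      obtain rfl : k' = 0 := by omega
      exact ⟨0, h', j' + 1, le_rfl, hX.app _⟩
  | @head c _ ps _ _ _ =>
    exact ⟨0, c, _, Nat.zero_le _, by simpa using (Hnf.var c).foldl_app (ps.map Prod.fst)⟩

theorem exists_hnf_of_steps_app {Q W N : Lam} (hQ : Closed Q) (hW : Closed W) {k h j : ℕ}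
    (hN : Hnf k h j N) (hs : Steps (app Q W) N) :
    ∃ H k' h' j', Steps (app Q (var 0)) H ∧ Hnf k' h' j' H := by
  have hsim : Sim W 0 (app Q (var 0)) (app Q W) :=
    (Sim.of_not_hasFree (hQ 0)).app (by simpa using Sim.head (W := W) (c := 0) [] (by simp) .refl)
  obtain ⟨H, hH, hsimH⟩ := hsim.steps hW hs
  obtain ⟨k', h', j', -, hnf⟩ := hsimH.exists_hnf hN
  exact ⟨H, k', h', j', hH, hnf⟩

end Simulation

section Terms

theorem closed_I : Closed I := by simp [Closed, HasFree, I]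
theorem closed_T : Closed T := by simp [Closed, HasFree, T]
theorem closed_F : Closed F := by simp [Closed, HasFree, F]

theorem isBetaNormal_T : IsBetaNormal T := trivial
theorem isBetaNormal_F : IsBetaNormal F := trivial

theorem hnf_T : Hnf 2 1 0 T := (Hnf.var 1).lam.lam
theorem hnf_F : Hnf 2 0 0 F := (Hnf.var 0).lam.lam

theorem app_T_app {A B : Lam} : Steps (app (app T A) B) A := by
  have h₁ : Step (app T A) (lam (lift 0 A)) := by
    simpa [T, subst, subst_lift] using Step.beta (lam (var 1)) A
  have h₂ : Step (app (lam (lift 0 A)) B) A := by simpa [subst_lift] using Step.beta (lift 0 A) B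
  exact (Relation.ReflTransGen.single (h₁.appL B)).tail h₂

theorem app_F_app {A B : Lam} : Steps (app (app F A) B) B := by
  have h₁ : Step (app F A) I := by simpa [F, I, subst] using Step.beta (lam (var 0)) A
  have h₂ : Step (app I B) B := by simpa [I, subst] using Step.beta (var 0) B
  exact (Relation.ReflTransGen.single (h₁.appL B)).tail h₂

theorem pair_app (A B C : Lam) : Step (app (pair A B) C) (app (app C A) B) := by
  simpa [pair, subst, subst_lift] using Step.beta (app (app (var 0) (lift 0 A)) (lift 0 B)) C

theorem subst_pair (A B : Lam) (n : ℕ) (N : Lam) :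
    subst (pair A B) n N = pair (subst A n N) (subst B n N) := by
  simp [pair, subst, lift_subst_of_le _ _ (Nat.zero_le n)]

theorem Closed.pair {A B : Lam} (hA : Closed A) (hB : Closed B) : Closed (pair A B) := by
  simp [Closed, Lam.pair, hA.lift_eq, hB.lift_eq, HasFree, hA _, hB _]

end Terms

section Normality

theorem isBetaEtaNormal_app {M N : Lam} (hM : ∀ X, M ≠ lam X) :
    IsBetaEtaNormal (app M N) ↔ IsBetaEtaNormal M ∧ IsBetaEtaNormal N := by
  cases M with
  | lam X => exact absurd rfl (hM X)
  | _ => simp [IsBetaEtaNormal]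

theorem isBetaEtaNormal_lam {M : Lam} (hM : ∀ A, M ≠ app A (var 0)) :
    IsBetaEtaNormal (lam M) ↔ IsBetaEtaNormal M := by
  rcases M with _ | ⟨A, _ | _ | _⟩ | _ <;> simp_all [IsBetaEtaNormal]

theorem isBetaEtaNormal_lams {X : Lam} (hX : IsBetaEtaNormal (lam X)) (k : ℕ) :
    IsBetaEtaNormal (lams (k + 1) X) := by
  induction k with
  | zero => exact hX
  | succ k ih => exact (isBetaEtaNormal_lam (by simp [lams])).mpr ih

end Normality

section Numerals

/-- `applyVars H n = H (var (n - 1)) … (var 0)`. -/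
def applyVars : Lam → ℕ → Lam
  | H, 0 => H
  | H, n + 1 => applyVars (app H (var n)) n

/-- `W n = λyₙ … y₀. yₙ yₙ₋₁ … y₀ I`. -/
def W (n : ℕ) : Lam := lams (n + 1) (app (applyVars (var n) n) I)

def tag : ℕ → Lam
  | 0 => T
  | _ + 1 => F

def numeral (n : ℕ) : Lam := pair (tag n) (W n)

/-- `S = λd z. z F (λa b. d F (a b))`. -/
def S : Lam :=
  lam (lam (app (app (var 0) F) (lam (lam (app (app (var 3) F) (app (var 1) (var 0)))))))

def Z : Lam := lam (app (var 0) T)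

theorem Hnf.applyVars {h j : ℕ} {H : Lam} (hH : Hnf 0 h j H) (n : ℕ) :
    Hnf 0 h (j + n) (applyVars H n) := by
  induction n generalizing j H with
  | zero => exact hH
  | succ n ih => simpa [Lam.applyVars, Nat.add_right_comm, Nat.add_assoc] using ih (hH.app _)

theorem hasFree_applyVars {H : Lam} {n i : ℕ} :
    HasFree (applyVars H n) i ↔ HasFree H i ∨ i < n := by
  induction n generalizing H with
  | zero => simp [applyVars]
  | succ n ih =>
    simp only [applyVars, ih, HasFree, Nat.lt_succ_iff_lt_or_eq]
    tauto

theorem subst_applyVars (H : Lam) {n m : ℕ} (hnm : n ≤ m) (N : Lam) :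
    subst (applyVars H n) m N = applyVars (subst H m N) n := by
  induction n generalizing H with
  | zero => rfl
  | succ n ih =>
    simp [applyVars, ih _ (Nat.le_of_succ_le hnm), subst, show n ≠ m by omega,
      show ¬ m < n by omega]

theorem isBetaEtaNormal_applyVars {H : Lam} (hH : IsBetaEtaNormal H) (hH' : ∀ X, H ≠ lam X)
    (n : ℕ) : IsBetaEtaNormal (applyVars H n) := by
  induction n generalizing H with
  | zero => exact hH
  | succ n ih => exact ih ((isBetaEtaNormal_app hH').mpr ⟨hH, trivial⟩) (by simp)

theorem hnf_W (n : ℕ) : Hnf (n + 1) n (n + 1) (W n) :=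
  (by simpa using ((Hnf.var n).applyVars n).app I : Hnf 0 n (n + 1) _).under_lams _

theorem W_injective : Function.Injective W := by
  intro m n h
  have hn := hnf_W n
  rw [← h] at hn
  exact ((hnf_W m).unique hn).2.1

theorem closed_W (n : ℕ) : Closed (W n) := by
  intro i
  simp [W, hasFree_lams, HasFree, hasFree_applyVars, closed_I _]
  omega

theorem closed_tag (n : ℕ) : Closed (tag n) := by
  cases n
  exacts [closed_T, closed_F]

theorem closed_numeral (n : ℕ) : Closed (numeral n) := (closed_tag n).pair (closed_W n)

theorem closed_S : Closed S := by simp [Closed, HasFree, S, closed_F _]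

theorem closed_Z : Closed Z := by simp [Closed, HasFree, Z, closed_T _]

theorem isBetaEtaNormal_W (n : ℕ) : IsBetaEtaNormal (W n) := by
  have hspine := (Hnf.var n).applyVars n
  refine isBetaEtaNormal_lams ((isBetaEtaNormal_lam (by simp [I])).mpr ?_) n
  exact (isBetaEtaNormal_app fun _ => hspine.ne_lam).mpr
    ⟨isBetaEtaNormal_applyVars (H := var n) trivial (by simp) n, trivial⟩

theorem isBetaEtaNormal_numeral (n : ℕ) : IsBetaEtaNormal (numeral n) := by
  rw [numeral, pair, (closed_tag n).lift_eq, (closed_W n).lift_eq,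
    isBetaEtaNormal_lam (by simp [W, lams]), isBetaEtaNormal_app (by simp),
    isBetaEtaNormal_app (by simp)]
  exact ⟨⟨trivial, by cases n <;> trivial⟩, isBetaEtaNormal_W n⟩

theorem numeral_injective : Function.Injective numeral := by
  intro m n h
  simp only [numeral, pair, (closed_tag _).lift_eq, (closed_W _).lift_eq, lam.injEq,
    app.injEq] at h
  exact W_injective h.2

theorem numeral_app_T (n : ℕ) : Steps (app (numeral n) T) (tag n) :=
  (Relation.ReflTransGen.single (pair_app _ _ _)).trans app_T_app

theorem numeral_app_F (n : ℕ) : Steps (app (numeral n) F) (W n) :=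
  (Relation.ReflTransGen.single (pair_app _ _ _)).trans app_F_app

theorem Z_app_numeral (n : ℕ) : Steps (app Z (numeral n)) (tag n) := by
  have h : Step (app Z (numeral n)) (app (numeral n) T) := by
    simpa [Z, subst, closed_T.subst_eq] using Step.beta (app (var 0) T) (numeral n)
  exact (Relation.ReflTransGen.single h).trans (numeral_app_T n)

theorem iterate_lift_zero_app_var (n : ℕ) :
    (lift 0)^[n] (app (var 1) (var 0)) = app (var (n + 1)) (var n) := by
  induction n with
  | zero => rfl
  | succ n ih => simp [Function.iterate_succ_apply', ih, lift]

theorem W_app (n : ℕ) :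
    Step (app (W n) (app (var 1) (var 0))) (lams n (app (applyVars (var (n + 1)) (n + 1)) I)) := by
  simpa [subst_lams, iterate_lift_zero_app_var, subst, subst_applyVars _ le_rfl,
    closed_I.subst_eq, applyVars, W, lams] using
    Step.beta (lams n (app (applyVars (var n) n) I)) (app (var 1) (var 0))

theorem S_app_numeral (n : ℕ) : Steps (app S (numeral n)) (numeral (n + 1)) := by
  have h₁ : Step (app S (numeral n))
      (lam (app (app (var 0) F) (lam (lam (app (app (numeral n) F) (app (var 1) (var 0))))))) := by
    simpa [S, subst, closed_F.subst_eq, (closed_numeral n).lift_eq] using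
      Step.beta (lam (app (app (var 0) F) (lam (lam (app (app (var 3) F) (app (var 1) (var 0)))))))
        (numeral n)
  have h₂ := ((numeral_app_F n).app_left (app (var 1) (var 0))).lam.lam.app_right (app (var 0) F)
  have h₃ := ((W_app n).lam.lam.appR (app (var 0) F)).lam
  have h_eq : numeral (n + 1) =
      lam (app (app (var 0) F) (lam (lam (lams n (app (applyVars (var (n + 1)) (n + 1)) I))))) := by
    simp only [numeral, tag, pair, closed_F.lift_eq, (closed_W _).lift_eq]
    rfl
  rw [h_eq]
  exact ((Relation.ReflTransGen.single h₁).trans h₂.lam).tail h₃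

end Numerals

section Predecessor

theorem not_separates_W {Q : Lam} (hQ : Closed Q) (hT : BetaEq (app Q (W 1)) T)
    (hF : ∀ m, 2 ≤ m → BetaEq (app Q (W m)) F) : False := by
  obtain ⟨H, k, h, j, hQH, hH⟩ := exists_hnf_of_steps_app hQ (closed_W 2) hnf_F
    ((hF 2 le_rfl).steps_of_isBetaNormal isBetaNormal_F)
  have hred (N : Lam) : BetaEq (app Q N) (subst H 0 N) := by
    simpa [subst, hQ.subst_eq] using (hQH.subst 0 N).betaEq
  by_cases hh : h = 0 + k
  · -- the head variable is the argument of `Q`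
    obtain ⟨As, hlen, hAs⟩ := hH.exists_subst_head hh (closed_W (j + 2))
    obtain ⟨C, hC⟩ := exists_steps_foldl_app_lams As (j + 3) _ (by omega)
    rw [hlen, Nat.add_sub_cancel_left] at hC
    have hQW : BetaEq (app Q (W (j + 2))) (lams k (lams 3 C)) := by
      have := hred (W (j + 2))
      rw [hAs] at this
      exact this.trans (hC.lams k).betaEq
    have hsteps : Steps (lams (3 + k) C) F := by
      rw [← lams_lams]
      exact (hQW.symm.trans (hF _ (by omega))).steps_of_isBetaNormal isBetaNormal_F
    obtain ⟨Y, hY⟩ := hsteps.lams_inv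
    simp [F, lams, Nat.add_comm 3 k] at hY
  · -- the head variable survives substitution, so `T` and `F` would have the same one
    obtain ⟨h', hh'⟩ := hH.exists_subst_of_ne hh
    have key (m : ℕ) (V : Lam) (hV : BetaEq (app Q (W m)) V) (hnV : IsBetaNormal V) :
        Hnf k h' j V :=
      (hh' _).steps (((hred _).symm.trans hV).steps_of_isBetaNormal hnV)
    have h₁ := (key 1 T hT isBetaNormal_T).unique hnf_T
    have h₂ := (key 2 F (hF 2 le_rfl) isBetaNormal_F).unique hnf_F
    omega

def predTag (P : Lam) : Lam := lam (app (app (lift 0 P) (pair F (var 0))) T)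

theorem closed_predTag {P : Lam} (hP : Closed P) : Closed (predTag P) := by
  simp [Closed, predTag, HasFree, pair, lift, hP.lift_eq, closed_F.lift_eq, closed_F _,
    closed_T _, hP _]

theorem predTag_app_W {P : Lam}
    (hpred : ∀ n, BetaEq (app P (numeral (n + 1))) (numeral n)) (n : ℕ) :
    BetaEq (app (predTag P) (W (n + 1))) (tag n) := by
  have h : Step (app (predTag P) (W (n + 1))) (app (app P (numeral (n + 1))) T) := by
    simpa [predTag, numeral, tag, subst, subst_lift, subst_pair, closed_F.subst_eq,
      closed_T.subst_eq] using
      Step.beta (app (app (lift 0 P) (pair F (var 0))) T) (W (n + 1))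
  exact ((Steps.betaEq (.single h)).trans ((hpred n).app_left T)).trans
    (numeral_app_T n).betaEq

theorem not_exists_predecessor :
    ¬ ∃ P, Closed P ∧ ∀ n, BetaEq (app P (numeral (n + 1))) (numeral n) := by
  rintro ⟨P, hP, hpred⟩
  refine not_separates_W (closed_predTag hP) (predTag_app_W hpred 0) fun m hm => ?_
  obtain ⟨n, rfl⟩ : ∃ n, m = n + 2 := ⟨m - 2, by omega⟩
  exact predTag_app_W hpred (n + 1)

end Predecessor

end Lam

/-- There exists a numeral system (an infinite sequence of pairwise distinct closed
βη-normal λ-terms) which possesses a closed λ-term for Successor and a closed λ-term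
for Zero Test, but no closed λ-term for Predecessor. -/
theorem statement3 :
    ∃ d : ℕ → Lam,
      (∀ n, Lam.Closed (d n)) ∧ (∀ n, Lam.IsBetaEtaNormal (d n)) ∧
      Function.Injective d ∧
      (∃ S, Lam.Closed S ∧ ∀ n, Lam.BetaEq (Lam.app S (d n)) (d (n + 1))) ∧
      (∃ Z, Lam.Closed Z ∧ Lam.BetaEq (Lam.app Z (d 0)) Lam.T ∧
          ∀ n, Lam.BetaEq (Lam.app Z (d (n + 1))) Lam.F) ∧
      ¬ ∃ P, Lam.Closed P ∧ ∀ n, Lam.BetaEq (Lam.app P (d (n + 1))) (d n) :=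
  ⟨Lam.numeral, Lam.closed_numeral, Lam.isBetaEtaNormal_numeral, Lam.numeral_injective,
    ⟨Lam.S, Lam.closed_S, fun n => (Lam.S_app_numeral n).betaEq⟩,
    ⟨Lam.Z, Lam.closed_Z, (Lam.Z_app_numeral 0).betaEq,
      fun n => (Lam.Z_app_numeral (n + 1)).betaEq⟩,
    Lam.not_exists_predecessor⟩
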